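/- arXiv:2112.08522 — 3 statements merged into one kernel-verified Lean document; each statement's English description precedes it below -/
import Mathlib

section
/- Let $W \subset \mathbb{R}^n$ be a linear subspace of dimension $d$. Then $W$ intersects the vertex set $\{0,1\}^n$ of the hypercube in at most $2^d$ points, i.e. $|W \cap \{0,1\}^n| \le 2^d$. -/
/-- A linear subspace `W ⊆ ℝⁿ` of dimension `d` meets the vertex set `{0,1}ⁿ` of the
hypercube in at most `2^d` points. -/
theorem hypercube_intersection (n d : ℕ) (W : Submodule ℝ (Fin n → ℝ))
    (hd : Module.finrank ℝ W = d) :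
    Set.ncard {v : Fin n → ℝ | v ∈ W ∧ ∀ i, v i = 0 ∨ v i = 1} ≤ 2 ^ d := by
  classical
  set S := {v : Fin n → ℝ | v ∈ W ∧ ∀ i, v i = 0 ∨ v i = 1} with hS
  -- coordinate functionals on W
  set φ : Fin n → Module.Dual ℝ W := fun i => (LinearMap.proj i).comp W.subtype with hφ
  obtain ⟨b, hbsub, hbspan, hbind⟩ := exists_linearIndependent ℝ (Set.range φ)
  have hbfin : b.Finite := hbind.setFinite
  haveI : Fintype b := hbfin.fintype
  have hchoice : ∀ g : b, ∃ i : Fin n, φ i = (g : Module.Dual ℝ W) :=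
    fun g => hbsub g.2
  choose idx hidx using hchoice
  set f : (Fin n → ℝ) → (b → ℝ) := fun v g => v (idx g) with hf
  set T : Finset (b → ℝ) := Fintype.piFinset fun _ => ({0, 1} : Finset ℝ) with hT
  have hmaps : ∀ v ∈ S, f v ∈ (T : Set (b → ℝ)) := by
    intro v hv
    simp only [Finset.mem_coe, hT, Fintype.mem_piFinset]
    intro g
    rcases hv.2 (idx g) with h | h <;> simp [hf, h]
  have hinj : Set.InjOn f S := by
    intro v hv v' hv' hvv'
    set w : W := (⟨v, hv.1⟩ : W) - ⟨v', hv'.1⟩ with hw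
    have hb0 : ∀ ψ ∈ b, ψ w = 0 := by
      intro ψ hψ
      have := congrFun hvv' ⟨ψ, hψ⟩
      have h2 : φ (idx ⟨ψ, hψ⟩) w = 0 := by
        simp only [hφ, LinearMap.comp_apply, hw, map_sub]
        simpa [hf] using sub_eq_zero_of_eq this
      rw [hidx ⟨ψ, hψ⟩] at h2
      exact h2
    have hspan0 : ∀ ψ ∈ Submodule.span ℝ b, ψ w = 0 := by
      intro ψ hψ
      induction hψ using Submodule.span_induction with
      | mem x hx => exact hb0 x hx
      | zero => simp
      | add x y _ _ hx hy => simp [hx, hy]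
      | smul c x _ hx => simp [hx]
    have hall : ∀ j, φ j w = 0 := by
      intro j
      exact hspan0 _ (hbspan ▸ Submodule.subset_span (Set.mem_range_self j))
    funext j
    have := hall j
    simp only [hφ, LinearMap.comp_apply, hw, map_sub] at this
    have : v j - v' j = 0 := this
    linarith
  have hcard : Fintype.card b ≤ d := by
    have := hbind.fintype_card_le_finrank
    rwa [Subspace.dual_finrank_eq, hd] at this
  calc S.ncard ≤ (T : Set (b → ℝ)).ncard :=
        Set.ncard_le_ncard_of_injOn f hmaps hinj T.finite_toSet
    _ = T.card := Set.ncard_coe_finset T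
    _ = 2 ^ Fintype.card b := by
        simp [hT, Fintype.card_piFinset, Finset.card_insert_of_notMem]
    _ ≤ 2 ^ d := Nat.pow_le_pow_right (by norm_num) hcard
end

section
/- Let $p_1, \ldots, p_J$ be distinct primes, each congruent to $1$ modulo $4$. For each $j$, let $\theta_{p_j} = \arg(\pi_j)$ where $\pi_j \in \mathbb{Z}[i]$ is a Gaussian prime with $|\pi_j|^2 = p_j$ and $0 < \arg(\pi_j) < \pi/4$. If $c_1, \ldots, c_J \in \mathbb{Z}$ satisfy $\exp(i \sum_{j=1}^J c_j \theta_{p_j}) = 1$, then $c_j = 0$ for all $j$. -/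
/-!
A Gaussian integer `w = a + b i` of prime norm is a Gaussian prime, and `0 < arg w < π / 4` means
`0 < b < a`, so `w` does not divide its conjugate; as the norms `p_j` are distinct, no `w_k`
divides `w_j` (`j ≠ k`) or any `w̄_j`. Since `w / w̄ = exp (2 i arg w)`, the hypothesis gives
`∏ (w_j / w̄_j) ^ c_j = 1`, that is `∏ w_j ^ c_j⁺ w̄_j ^ c_j⁻ = ∏ w_j ^ c_j⁻ w̄_j ^ c_j⁺`
in `ℤ[i]`, and the multiplicity of `w_k` on the two sides is `c_k⁺` and `c_k⁻`.
-/
open Complex ComplexConjugate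

namespace Zsqrtd

variable {d : ℤ}

theorem norm_dvd_norm {x y : ℤ√d} (h : x ∣ y) : x.norm ∣ y.norm :=
  map_dvd normMonoidHom h

theorem irreducible_of_natAbs_norm_prime {z : ℤ√d} (h : z.norm.natAbs.Prime) :
    Irreducible z := by
  refine ⟨fun hu => h.one_lt.ne' (norm_eq_one_iff.mpr hu), fun x y hxy => ?_⟩
  rw [hxy, norm_mul, Int.natAbs_mul, Nat.prime_mul_iff] at h
  simp only [← norm_eq_one_iff]
  exact h.symm.imp (·.2) (·.2)

theorem not_dvd_of_natAbs_norm_prime_ne {x y : ℤ√d} (hx : x.norm.natAbs.Prime)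
    (hy : y.norm.natAbs.Prime) (hne : x.norm.natAbs ≠ y.norm.natAbs) : ¬x ∣ y := fun h =>
  hne ((Nat.prime_dvd_prime_iff_eq hx hy).mp (Int.natAbs_dvd_natAbs.mpr (norm_dvd_norm h)))

end Zsqrtd

namespace GaussianInt

theorem not_dvd_star_of_pos_of_lt {z : GaussianInt} (h0 : 0 < z.im) (hlt : z.im < z.re) :
    ¬z ∣ star z := by
  rintro ⟨t, ht⟩
  have hre := congrArg Zsqrtd.re ht
  have him := congrArg Zsqrtd.im ht
  simp only [Zsqrtd.re_star, Zsqrtd.im_star, Zsqrtd.re_mul, Zsqrtd.im_mul] at hre him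
  -- `t.re` would be the cosine of `2 arg z`, which lies strictly between `0` and `1`
  have key : z.re ^ 2 - z.im ^ 2 = (z.re ^ 2 + z.im ^ 2) * t.re := by
    linear_combination z.re * hre + z.im * him
  have ht0 : 0 < t.re := by nlinarith
  nlinarith

end GaussianInt

namespace Complex

theorem im_pos_and_im_lt_re_of_arg_mem_Ioo {z : ℂ} (h0 : 0 < arg z) (h1 : arg z < Real.pi / 4) :
    0 < z.im ∧ z.im < z.re := by
  have hz : z ≠ 0 := by rintro rfl; simp at h0
  have hr : 0 < ‖z‖ := norm_pos_iff.mpr hz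
  have hpi := Real.pi_pos
  have hsin : 0 < Real.sin (arg z) := Real.sin_pos_of_pos_of_lt_pi h0 (by linarith)
  have hsin_cos : Real.sin (arg z) < Real.cos (arg z) :=
    calc Real.sin (arg z) < Real.sin (Real.pi / 4) :=
          Real.strictMonoOn_sin ⟨by linarith, by linarith⟩ ⟨by linarith, by linarith⟩ h1
      _ = Real.cos (Real.pi / 4) := by rw [Real.sin_pi_div_four, Real.cos_pi_div_four]
      _ < Real.cos (arg z) :=
          Real.strictAntiOn_cos ⟨h0.le, by linarith⟩ ⟨by linarith, by linarith⟩ h1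
  rw [sin_arg] at hsin hsin_cos
  rw [cos_arg hz] at hsin_cos
  exact ⟨(div_pos_iff_of_pos_right hr).mp hsin, (div_lt_div_iff_of_pos_right hr).mp hsin_cos⟩

theorem div_conj_eq_exp_arg_mul_I_sq {z : ℂ} (hz : z ≠ 0) :
    z / conj z = exp (arg z * I) ^ 2 := by
  have hr : (‖z‖ : ℂ) ≠ 0 := ofReal_ne_zero.mpr (norm_ne_zero_iff.mpr hz)
  conv_lhs => rw [← norm_mul_exp_arg_mul_I z]
  rw [map_mul, conj_ofReal, ← exp_conj, map_mul, conj_ofReal, conj_I, mul_neg, exp_neg,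
    mul_div_mul_left _ _ hr, div_inv_eq_mul, sq]

theorem prod_div_conj_zpow_eq_one {ι : Type*} [Fintype ι] {z : ι → ℂ} (hz : ∀ j, z j ≠ 0)
    {c : ι → ℤ} (h : exp (I * ∑ j, (c j : ℂ) * (arg (z j) : ℂ)) = 1) :
    ∏ j, (z j / conj (z j)) ^ c j = 1 := by
  calc ∏ j, (z j / conj (z j)) ^ c j = ∏ j, exp (c j * (arg (z j) * I)) ^ 2 := by
        refine Finset.prod_congr rfl fun j _ => ?_
        rw [div_conj_eq_exp_arg_mul_I_sq (hz j), exp_int_mul, ← zpow_natCast, ← zpow_natCast,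
          ← zpow_mul, ← zpow_mul, mul_comm (c j)]
    _ = exp (I * ∑ j, (c j : ℂ) * (arg (z j) : ℂ)) ^ 2 := by
        rw [Finset.prod_pow, ← exp_sum, Finset.mul_sum]
        congr 2
        exact Finset.sum_congr rfl fun j _ => by ring
    _ = 1 := by rw [h, one_pow]

end Complex

theorem GaussianInt.not_dvd_star_of_arg_mem_Ioo {z : GaussianInt} (h0 : 0 < arg (z : ℂ))
    (h1 : arg (z : ℂ) < Real.pi / 4) : ¬z ∣ star z := by
  obtain ⟨him, hlt⟩ := im_pos_and_im_lt_re_of_arg_mem_Ioo h0 h1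
  rw [← intCast_im, Int.cast_pos] at him
  rw [← intCast_re, ← intCast_im, Int.cast_lt] at hlt
  exact not_dvd_star_of_pos_of_lt him hlt

theorem prod_pow_toNat_eq_of_prod_div_zpow_eq_one {K ι : Type*} [Field K] [Fintype ι]
    {u v : ι → K} (hu : ∀ j, u j ≠ 0) (hv : ∀ j, v j ≠ 0) {c : ι → ℤ}
    (h : ∏ j, (u j / v j) ^ c j = 1) :
    ∏ j, u j ^ (c j).toNat * v j ^ (-c j).toNat =
      ∏ j, u j ^ (-c j).toNat * v j ^ (c j).toNat := by
  have hterm : ∀ j, (u j / v j) ^ c j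
      = u j ^ (c j).toNat * v j ^ (-c j).toNat / (u j ^ (-c j).toNat * v j ^ (c j).toNat) := by
    intro j
    conv_lhs => rw [← Int.toNat_sub_toNat_neg (c j)]
    rw [zpow_sub₀ (div_ne_zero (hu j) (hv j)), zpow_natCast, zpow_natCast, div_pow, div_pow]
    field_simp
  rw [Finset.prod_congr rfl fun j _ => hterm j, Finset.prod_div_distrib,
    div_eq_one_iff_eq (Finset.prod_ne_zero_iff.mpr fun j _ => by simp [hu j, hv j])] at h
  exact h

theorem emultiplicity_prod_pow_mul_pow {α ι : Type*} [CommMonoidWithZero α] [IsCancelMulZero α]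
    [Fintype ι] {x y : ι → α} {k : ι} (hk : Prime (x k)) (hx : ∀ j ≠ k, ¬x k ∣ x j)
    (hy : ∀ j, ¬x k ∣ y j)
    (n m : ι → ℕ) : emultiplicity (x k) (∏ j, x j ^ n j * y j ^ m j) = n k := by
  rw [Finset.emultiplicity_prod hk,
    Finset.sum_eq_single_of_mem k (Finset.mem_univ k) fun j _ hjk => ?_,
    emultiplicity_mul hk, emultiplicity_pow_self_of_prime hk, emultiplicity_pow hk,
    emultiplicity_eq_zero.mpr (hy k), mul_zero, add_zero]
  rw [emultiplicity_mul hk, emultiplicity_pow hk, emultiplicity_pow hk,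
    emultiplicity_eq_zero.mpr (hx j hjk), emultiplicity_eq_zero.mpr (hy j), mul_zero, mul_zero,
    add_zero]

theorem angles_linearly_independent_general (J : ℕ) (p : Fin J → ℕ)
    (hp : ∀ j, Nat.Prime (p j))
    (hinj : Function.Injective p)
    (a b : Fin J → ℤ) (hab : ∀ j, (a j) ^ 2 + (b j) ^ 2 = (p j : ℤ))
    (θ : Fin J → ℝ)
    (hθ : ∀ j, θ j = Complex.arg ((a j : ℂ) + (b j : ℂ) * Complex.I))
    (hθpos : ∀ j, 0 < θ j) (hθlt : ∀ j, θ j < Real.pi / 4)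
    (c : Fin J → ℤ)
    (h : Complex.exp (Complex.I * (∑ j, (c j : ℂ) * (θ j : ℂ))) = 1) :
    ∀ j, c j = 0 := by
  intro k
  set w : Fin J → GaussianInt := fun j => ⟨a j, b j⟩
  obtain rfl : θ = fun j => arg (w j : ℂ) :=
    funext fun j => by rw [hθ, GaussianInt.toComplex_def']
  have hnorm : ∀ j, (w j).norm.natAbs = p j := fun j => by
    rw [Zsqrtd.norm_def, ← Int.natAbs_natCast (p j), ← hab]
    dsimp only [w]
    congr 1
    ring
  have hnorm_star : ∀ j, (star (w j)).norm.natAbs = p j := fun j => by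
    rw [Zsqrtd.norm_conj, hnorm]
  have hw0 : ∀ j, (w j : ℂ) ≠ 0 := fun j hw => (hθpos j).ne' (by simp [hw])
  have hprime : ∀ j, (w j).norm.natAbs.Prime := fun j => hnorm j ▸ hp j
  have hprime_star : ∀ j, (star (w j)).norm.natAbs.Prime := fun j => hnorm_star j ▸ hp j
  have hk : Prime (w k) :=
    irreducible_iff_prime.mp (Zsqrtd.irreducible_of_natAbs_norm_prime (hprime k))
  have hx : ∀ j ≠ k, ¬w k ∣ w j := fun j hjk =>
    Zsqrtd.not_dvd_of_natAbs_norm_prime_ne (hprime k) (hprime j)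
      (by simpa [hnorm] using hinj.ne hjk.symm)
  have hy : ∀ j, ¬w k ∣ star (w j) := by
    intro j
    obtain rfl | hjk := eq_or_ne j k
    · exact GaussianInt.not_dvd_star_of_arg_mem_Ioo (hθpos j) (hθlt j)
    · exact Zsqrtd.not_dvd_of_natAbs_norm_prime_ne (hprime k) (hprime_star j)
        (by simpa [hnorm, hnorm_star] using hinj.ne hjk.symm)
  have hrel := prod_pow_toNat_eq_of_prod_div_zpow_eq_one hw0
    (fun j => (map_ne_zero _).mpr (hw0 j)) (prod_div_conj_zpow_eq_one hw0 h)
  simp only [← GaussianInt.toComplex_star, ← map_pow, ← map_mul, ← map_prod] at hrel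
  have hmul := congrArg (emultiplicity (w k)) (GaussianInt.toComplex_injective hrel)
  rw [emultiplicity_prod_pow_mul_pow hk hx hy, emultiplicity_prod_pow_mul_pow hk hx hy,
    Nat.cast_inj] at hmul
  omega

/-- Linear independence of the angles of distinct split Gaussian primes:
if `p₁, …, p_J` are distinct primes `≡ 1 (mod 4)`, `θ_{p_j} = arg(π_j)` with
`π_j = a_j + b_j i` a Gaussian prime of norm `p_j` and `0 < arg π_j < π/4`, and
`exp(i ∑ c_j θ_{p_j}) = 1` for integers `c_j`, then all `c_j = 0`. -/
theorem angles_linearly_independent (J : ℕ) (p : Fin J → ℕ)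
    (hp : ∀ j, Nat.Prime (p j)) (hmod : ∀ j, p j % 4 = 1)
    (hinj : Function.Injective p)
    (a b : Fin J → ℤ) (hab : ∀ j, (a j) ^ 2 + (b j) ^ 2 = (p j : ℤ))
    (θ : Fin J → ℝ)
    (hθ : ∀ j, θ j = Complex.arg ((a j : ℂ) + (b j : ℂ) * Complex.I))
    (hθpos : ∀ j, 0 < θ j) (hθlt : ∀ j, θ j < Real.pi / 4)
    (c : Fin J → ℤ)
    (h : Complex.exp (Complex.I * (∑ j, (c j : ℂ) * (θ j : ℂ))) = 1) :
    ∀ j, c j = 0 :=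
  angles_linearly_independent_general J p hp hinj a b hab θ hθ hθpos hθlt c h
end

section
/- Fix $r \ge 2$, and suppose vectors $\vec{v}_1, \ldots, \vec{v}_r \in \mathbb{R}^M$ are given; set $\vec{w}_i = \vec{v}_i - \vec{v}_{i+1}$ for $i = 1, \ldots, r-1$, and let $W = \mathrm{Span}(\vec{w}_1, \ldots, \vec{w}_{r-1})$ with $d = \dim W$. Then there exists a permutation $i_1, \ldots, i_r$ of $1, \ldots, r$ such that, setting $\vec{w}'_j = \vec{v}_{i_j} - \vec{v}_{i_{j+1}}$ for $j = 1, \ldots, r-1$, the vectors $\vec{w}'_1, \ldots, \vec{w}'_d$ span $W$. -/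
/-- Given vectors `v₁, …, v_r ∈ ℝ^M`, set `wᵢ = vᵢ - vᵢ₊₁` and let
`W = Span(w₁, …, w_{r-1})` with `d = dim W`.  Then there is a permutation
`i₁, …, i_r` of `1, …, r` such that, setting `w'ⱼ = v_{iⱼ} - v_{iⱼ₊₁}`, the vectors
`w'₁, …, w'_d` span `W`. -/
theorem consecutive_differences_span (M r : ℕ) (hr : 2 ≤ r)
    (v : Fin r → (Fin M → ℝ))
    (W : Submodule ℝ (Fin M → ℝ))
    (hW : W = Submodule.span ℝ (Set.range (fun i : Fin (r - 1) =>
      v ⟨(i : ℕ), by have := i.isLt; omega⟩ - v ⟨(i : ℕ) + 1, by have := i.isLt; omega⟩)))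
    (d : ℕ) (hd : Module.finrank ℝ W = d) :
    ∃ σ : Equiv.Perm (Fin r),
      W = Submodule.span ℝ {x : Fin M → ℝ | ∃ j : Fin (r - 1), (j : ℕ) < d ∧
        x = v (σ ⟨(j : ℕ), by have := j.isLt; omega⟩) -
            v (σ ⟨(j : ℕ) + 1, by have := j.isLt; omega⟩)} := by
  classical
  have hr0 : 0 < r := by omega
  set u : Fin r → (Fin M → ℝ) := fun i => v i - v ⟨0, hr0⟩ with hu
  -- Step A : W is the span of the differences with v 0
  have hW0 : W = Submodule.span ℝ (Set.range u) := by
    rw [hW]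
    apply le_antisymm
    · rw [Submodule.span_le]
      rintro x ⟨i, rfl⟩
      have hi := i.isLt
      show v ⟨(i : ℕ), by omega⟩ - v ⟨(i : ℕ) + 1, by omega⟩ ∈
        (Submodule.span ℝ (Set.range u) : Set (Fin M → ℝ))
      have hx : v ⟨(i : ℕ), by omega⟩ - v ⟨(i : ℕ) + 1, by omega⟩ =
          u ⟨(i : ℕ), by omega⟩ - u ⟨(i : ℕ) + 1, by omega⟩ := by
        simp [hu]
      rw [hx]
      exact sub_mem (Submodule.subset_span ⟨_, rfl⟩) (Submodule.subset_span ⟨_, rfl⟩)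
    · rw [Submodule.span_le]
      rintro x ⟨i, rfl⟩
      -- show u i ∈ span by induction on i.val
      suffices h : ∀ n (hn : n < r), u ⟨n, hn⟩ ∈ Submodule.span ℝ
          (Set.range (fun i : Fin (r - 1) =>
            v ⟨(i : ℕ), by have := i.isLt; omega⟩ - v ⟨(i : ℕ) + 1, by have := i.isLt; omega⟩)) by
        have := h i.val i.isLt
        simpa using this
      intro n
      induction n with
      | zero => intro hn; simp [hu]
      | succ n ih =>
        intro hn
        have hn' : n < r := by omega
        have hx : u ⟨n + 1, hn⟩ = u ⟨n, hn'⟩ -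
            (v ⟨n, by omega⟩ - v ⟨n + 1, by omega⟩) := by
          simp [hu]
        rw [hx]
        refine sub_mem (ih hn') (Submodule.subset_span ⟨⟨n, by omega⟩, rfl⟩)
  -- Step B : extract a linearly independent spanning subset t
  obtain ⟨t, hts, htsp, htli⟩ := exists_linearIndependent ℝ (Set.range u)
  have htfin : t.Finite := (Set.finite_range u).subset hts
  have : Fintype t := htfin.fintype
  have htcard : t.toFinset.card = d := by
    rw [← hd, hW0, ← htsp, finrank_span_set_eq_card htli]
  have ht0 : (0 : Fin M → ℝ) ∉ t := by
    intro h
    exact htli.ne_zero ⟨0, h⟩ rfl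
  -- Step D : choose indices
  have hidx : ∀ x ∈ t, ∃ i : Fin r, u i = x := fun x hx => hts hx
  choose ι hι using hidx
  -- equiv Fin d ≃ t
  have hcard' : Fintype.card t = d := by rwa [← Set.toFinset_card]
  obtain ⟨et⟩ : Nonempty (Fin d ≃ t) := ⟨(Fintype.equivFinOfCardEq hcard').symm⟩
  set j : Fin d → Fin r := fun k => ι (et k) (et k).2 with hj
  have hj0 : ∀ k, (j k : ℕ) ≠ 0 := by
    intro k h
    apply ht0
    have h0 : j k = ⟨0, hr0⟩ := Fin.ext h
    have huj : u (j k) = ↑(et k) := hι (et k) (et k).2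
    rw [h0] at huj
    simp [hu] at huj
    rw [huj]
    exact (et k).2
  have hjinj : Function.Injective j := by
    intro a b hab
    have ha : u (j a) = ↑(et a) := hι (et a) (et a).2
    have hb : u (j b) = ↑(et b) := hι (et b) (et b).2
    have : (et a : Fin M → ℝ) = et b := by rw [← ha, ← hb, hab]
    exact et.injective (Subtype.ext this)
  -- g : Fin (d+1) → Fin r, 0 ↦ 0, k+1 ↦ j k
  set g : Fin (d + 1) → Fin r := fun k =>
    if h : (k : ℕ) = 0 then ⟨0, hr0⟩ else j ⟨(k : ℕ) - 1, by have := k.isLt; omega⟩ with hg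
  have hginj : Function.Injective g := by
    intro a b hab
    simp only [hg] at hab
    split_ifs at hab with h1 h2 h2
    · exact Fin.ext (by omega)
    · exact absurd (congrArg Fin.val hab).symm (by simpa using hj0 _)
    · exact absurd (congrArg Fin.val hab) (by simpa using hj0 _)
    · have := hjinj hab
      have := congrArg Fin.val this
      simp at this
      exact Fin.ext (by omega)
  have hd1r : d + 1 ≤ r := by
    have := Fintype.card_le_of_injective g hginj
    simpa using this
  -- Step F : extend to a permutation
  set p : Fin r → Prop := fun x => (x : ℕ) < d + 1 with hp
  set hpe : { x : Fin r // p x } ≃ Fin (d + 1) :=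
    { toFun := fun x => ⟨(x : Fin r), x.2⟩
      invFun := fun k => ⟨⟨(k : ℕ), by omega⟩, k.isLt⟩
      left_inv := fun x => by ext; rfl
      right_inv := fun k => by ext; rfl }
  set e : { x : Fin r // p x } ≃ { x : Fin r // x ∈ Set.range g } :=
    hpe.trans (Equiv.ofInjective g hginj) with he
  refine ⟨e.extendSubtype, ?_⟩
  have hσ : ∀ (k : ℕ) (hk : k < d + 1),
      e.extendSubtype ⟨k, by omega⟩ = g ⟨k, hk⟩ := by
    intro k hk
    rw [Equiv.extendSubtype_apply_of_mem e _ hk]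
    rfl
  -- the target set
  set S' : Set (Fin M → ℝ) := {x : Fin M → ℝ | ∃ j : Fin (r - 1), (j : ℕ) < d ∧
        x = v (e.extendSubtype ⟨(j : ℕ), by have := j.isLt; omega⟩) -
            v (e.extendSubtype ⟨(j : ℕ) + 1, by have := j.isLt; omega⟩)} with hS'
  -- members of S' written via g
  have hmem : ∀ (k : ℕ) (hk : k < d),
      v (g ⟨k, by omega⟩) - v (g ⟨k + 1, by omega⟩) ∈ S' := by
    intro k hk
    refine ⟨⟨k, by omega⟩, hk, ?_⟩
    rw [hσ k (by omega), hσ (k + 1) (by omega)]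
  apply le_antisymm
  · -- W ⊆ span S' : show t ⊆ span S'
    have hkey : ∀ (k : ℕ) (hk : k < d + 1),
        u (g ⟨k, hk⟩) ∈ Submodule.span ℝ S' := by
      intro k
      induction k with
      | zero =>
        intro hk
        have : g ⟨0, hk⟩ = ⟨0, hr0⟩ := by simp [hg]
        rw [this]
        simp [hu]
      | succ k ih =>
        intro hk
        have hk' : k < d + 1 := by omega
        have hx : u (g ⟨k + 1, hk⟩) = u (g ⟨k, hk'⟩) -
            (v (g ⟨k, hk'⟩) - v (g ⟨k + 1, hk⟩)) := by
          simp [hu]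
        rw [hx]
        exact sub_mem (ih hk') (Submodule.subset_span (hmem k (by omega)))
    rw [hW0, ← htsp, Submodule.span_le]
    intro x hx
    obtain ⟨k, hk⟩ : ∃ k : Fin d, et k = ⟨x, hx⟩ := ⟨et.symm ⟨x, hx⟩, et.apply_symm_apply _⟩
    have hgx : g ⟨(k : ℕ) + 1, by omega⟩ = j k := by
      simp [hg]
    have hux : u (j k) = x := by
      have h' : u (j k) = ↑(et k) := hι (et k) (et k).2
      rw [hk] at h'
      exact h'
    have := hkey ((k : ℕ) + 1) (by omega)
    rwa [hgx, hux] at this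
  · -- span S' ⊆ W
    rw [Submodule.span_le]
    rintro x ⟨jj, hjd, rfl⟩
    have h1 := hσ (jj : ℕ) (by omega)
    have h2 := hσ ((jj : ℕ) + 1) (by omega)
    rw [h1, h2]
    have huW : ∀ i : Fin r, u i ∈ W := by
      intro i
      rw [hW0]
      exact Submodule.subset_span ⟨i, rfl⟩
    have : v (g ⟨(jj : ℕ), by omega⟩) - v (g ⟨(jj : ℕ) + 1, by omega⟩) =
        u (g ⟨(jj : ℕ), by omega⟩) - u (g ⟨(jj : ℕ) + 1, by omega⟩) := by
      simp [hu]
    rw [this]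
    exact sub_mem (huW _) (huW _)
end
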